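/- Let L ≥ 1 and let f₀,…,f_L be pairwise distinct reals, b₀,…,b_L ≥ 0, ζ ∈ {1,2}. For μ > 0 small enough, the lower-triangular bidiagonal matrix M_ζ(μ,L) with diagonal entries f_i − b_i μ and subdiagonal entries (μ/ζ) b_{i-1} is diagonalizable: M_ζ = S D S^{-1} where D = diag(f_i − b_i μ), S_{ij} = (ζ/μ)^{L-i} · (∏_{k=i+1}^{L} ((f_j − f_k) + μ(b_k − b_j))) / (∏_{ℓ=i}^{L-1} b_ℓ) · 1_{i ≥ j}, and S^{-1}_{ij} = (μ/ζ)^{L-j} · (∏_{ℓ=j}^{L-1} b_ℓ) / (∏_{k=j, k≠i}^{L} ((f_i − f_k) + μ(b_k − b_i))) · 1_{i ≥ j}. -/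

import Mathlib

open Polynomial Finset

lemma leadingCoeff_basisDivisor {F : Type*} [Field F] {x y : F} :
    (Lagrange.basisDivisor x y).leadingCoeff = (x - y)⁻¹ := by
  rw [Lagrange.basisDivisor, leadingCoeff_mul, leadingCoeff_C,
    (monic_X_sub_C y).leadingCoeff, mul_one]

lemma leadingCoeff_basis {F : Type*} [Field F] {ι : Type*} [DecidableEq ι]
    {s : Finset ι} {v : ι → F} (hvs : Set.InjOn v s) {i : ι} (hi : i ∈ s) :
    (Lagrange.basis s v i).leadingCoeff = ∏ j ∈ s.erase i, (v i - v j)⁻¹ := by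
  rw [Lagrange.basis, leadingCoeff_prod]
  exact prod_congr rfl fun j hj => leadingCoeff_basisDivisor

lemma lagrange_sum_inv {F : Type*} [Field F] {ι : Type*} [DecidableEq ι]
    (s : Finset ι) (x : ι → F) (hx : Set.InjOn x s) (h2 : 2 ≤ s.card) :
    ∑ m ∈ s, ∏ k ∈ s.erase m, (x m - x k)⁻¹ = 0 := by
  have h1 : (∑ j ∈ s, Lagrange.basis s x j) = 1 :=
    Lagrange.sum_basis hx (Finset.card_pos.mp (by omega))
  have h3 := congrArg (fun p => Polynomial.coeff p (s.card - 1)) h1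
  simp only [finset_sum_coeff, coeff_one] at h3
  rw [if_neg (by omega)] at h3
  rw [← h3]
  refine sum_congr rfl fun m hm => ?_
  rw [← leadingCoeff_basis hx hm, Polynomial.leadingCoeff,
    Lagrange.natDegree_basis hx hm]


lemma frac_aux (c1 c2 P Bi Bj R : ℝ) (hP : P ≠ 0) (hBi : Bi ≠ 0) (hR : R ≠ 0) :
    (c1 * P) / Bi * ((c2 * Bj) / (R * P)) = (c1 * c2 * Bj / Bi) * R⁻¹ := by
  field_simp

set_option maxHeartbeats 2000000 in
/-- the lower-triangular bidiagonal matrix `M_ζ(μ,L)` (diagonal entries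
`f_i - b_i μ`, subdiagonal entries `(μ/ζ) b_{i-1}`) is diagonalizable for `μ` small
enough (i.e. whenever all the products `∏_{k≠i} ((f_i - f_k) + μ(b_k - b_i))` are
nonzero), with explicit diagonalizing matrices `S`, `S⁻¹` and `D = diag(f_i - b_i μ)`. -/
theorem M_matrix_diagonalizable (L : ℕ) (hL : 1 ≤ L)
    (f b : Fin (L + 1) → ℝ) (ζ μ : ℝ)
    (hζ : ζ = 1 ∨ ζ = 2) (hμ : 0 < μ)
    (hf : ∀ i j, i ≠ j → f i ≠ f j)
    (hbpos : ∀ i : Fin (L + 1), (i : ℕ) ≤ L - 1 → 0 < b i)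
    (hbnonneg : ∀ i, 0 ≤ b i)
    (hnz : ∀ i : Fin (L + 1),
      ∏ k ∈ Finset.univ.erase i, ((f i - f k) + μ * (b k - b i)) ≠ 0) :
    let M : Matrix (Fin (L + 1)) (Fin (L + 1)) ℝ := fun i j =>
      if i = j then f i - b i * μ
      else if (j : ℕ) + 1 = (i : ℕ) then (μ / ζ) * b j else 0
    let D : Matrix (Fin (L + 1)) (Fin (L + 1)) ℝ := fun i j =>
      if i = j then f i - b i * μ else 0
    let S : Matrix (Fin (L + 1)) (Fin (L + 1)) ℝ := fun i j =>
      if j ≤ i then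
        (ζ / μ) ^ (L - (i : ℕ)) *
          (∏ k ∈ Finset.univ.filter (fun k : Fin (L + 1) => (i : ℕ) < (k : ℕ)),
              ((f j - f k) + μ * (b k - b j))) /
          (∏ l ∈ Finset.univ.filter (fun l : Fin (L + 1) => (i : ℕ) ≤ (l : ℕ) ∧ (l : ℕ) < L),
              b l)
      else 0
    let Sinv : Matrix (Fin (L + 1)) (Fin (L + 1)) ℝ := fun i j =>
      if j ≤ i then
        (μ / ζ) ^ (L - (j : ℕ)) *
          (∏ l ∈ Finset.univ.filter (fun l : Fin (L + 1) => (j : ℕ) ≤ (l : ℕ) ∧ (l : ℕ) < L),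
              b l) /
          (∏ k ∈ Finset.univ.filter (fun k : Fin (L + 1) => (j : ℕ) ≤ (k : ℕ) ∧ k ≠ i),
              ((f i - f k) + μ * (b k - b i)))
      else 0
    S * Sinv = 1 ∧ Sinv * S = 1 ∧ M = S * D * Sinv := by
  intro M D S Sinv
  have hζ0 : ζ ≠ 0 := by rcases hζ with h | h <;> rw [h] <;> norm_num
  have hμ0 : μ ≠ 0 := ne_of_gt hμ
  set x : Fin (L + 1) → ℝ := fun i => f i - μ * b i with hxdef
  have hfb : ∀ a k : Fin (L + 1), (f a - f k) + μ * (b k - b a) = x a - x k := by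
    intro a k; simp only [hxdef]; ring
  have hxne : ∀ a k : Fin (L + 1), k ≠ a → x a - x k ≠ 0 := by
    intro a k hka
    have h := hnz a
    rw [Finset.prod_ne_zero_iff] at h
    have := h k (Finset.mem_erase.mpr ⟨hka, Finset.mem_univ k⟩)
    rwa [hfb] at this
  have hBne : ∀ i : Fin (L + 1),
      (∏ l ∈ Finset.univ.filter (fun l : Fin (L + 1) => (i : ℕ) ≤ (l : ℕ) ∧ (l : ℕ) < L),
        b l) ≠ 0 := by
    intro i
    rw [Finset.prod_ne_zero_iff]
    intro l hl
    simp only [mem_filter] at hl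
    exact ne_of_gt (hbpos l (by omega))
  have hPne : ∀ m i : Fin (L + 1), (m : ℕ) ≤ (i : ℕ) →
      (∏ k ∈ Finset.univ.filter (fun k : Fin (L + 1) => (i : ℕ) < (k : ℕ)),
        (x m - x k)) ≠ 0 := by
    intro m i hmi
    rw [Finset.prod_ne_zero_iff]
    intro k hk
    simp only [mem_filter] at hk
    exact hxne m k (by intro h; rw [h] at hk; omega)
  have hSSinv : S * Sinv = 1 := by
    ext i j
    rw [Matrix.mul_apply, Matrix.one_apply]
    by_cases hji : j ≤ i
    · have hjiN : (j : ℕ) ≤ (i : ℕ) := hji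
      set T := Finset.univ.filter (fun m : Fin (L + 1) => j ≤ m ∧ m ≤ i) with hT
      have hsum : ∑ m, S i m * Sinv m j = ∑ m ∈ T, S i m * Sinv m j := by
        rw [hT]
        refine (Finset.sum_filter_of_ne ?_).symm
        intro m _ hne
        constructor
        · by_contra h
          apply hne
          have : Sinv m j = 0 := if_neg h
          rw [this, mul_zero]
        · by_contra h
          apply hne
          have : S i m = 0 := if_neg h
          rw [this, zero_mul]
      have hterm : ∀ m ∈ T, S i m * Sinv m j =
          ((ζ / μ) ^ (L - (i : ℕ)) * (μ / ζ) ^ (L - (j : ℕ)) *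
            (∏ l ∈ Finset.univ.filter
                (fun l : Fin (L + 1) => (j : ℕ) ≤ (l : ℕ) ∧ (l : ℕ) < L), b l) /
            (∏ l ∈ Finset.univ.filter
                (fun l : Fin (L + 1) => (i : ℕ) ≤ (l : ℕ) ∧ (l : ℕ) < L), b l)) *
          ∏ k ∈ T.erase m, (x m - x k)⁻¹ := by
        intro m hm
        rw [hT, mem_filter] at hm
        obtain ⟨-, hjm, hmi⟩ := hm
        have hjmN : (j : ℕ) ≤ (m : ℕ) := hjm
        have hmiN : (m : ℕ) ≤ (i : ℕ) := hmi
        have hS : S i m = (ζ / μ) ^ (L - (i : ℕ)) *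
            (∏ k ∈ Finset.univ.filter (fun k : Fin (L + 1) => (i : ℕ) < (k : ℕ)),
              (x m - x k)) /
            (∏ l ∈ Finset.univ.filter
              (fun l : Fin (L + 1) => (i : ℕ) ≤ (l : ℕ) ∧ (l : ℕ) < L), b l) := by
          show (if m ≤ i then _ else _) = _
          rw [if_pos hmi]
          simp only [hfb]
        have hQsplit : Finset.univ.filter
              (fun k : Fin (L + 1) => (j : ℕ) ≤ (k : ℕ) ∧ k ≠ m)
            = (T.erase m) ∪ Finset.univ.filter
              (fun k : Fin (L + 1) => (i : ℕ) < (k : ℕ)) := by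
          ext k
          simp only [mem_filter, mem_union, mem_erase, hT, mem_univ, true_and,
            Fin.le_def, ne_eq, Fin.ext_iff]
          omega
        have hdisj : Disjoint (T.erase m)
            (Finset.univ.filter (fun k : Fin (L + 1) => (i : ℕ) < (k : ℕ))) := by
          rw [Finset.disjoint_left]
          intro k hk hk'
          simp only [mem_erase, hT, mem_filter, mem_univ, true_and, Fin.le_def] at hk hk'
          omega
        have hSinv : Sinv m j = (μ / ζ) ^ (L - (j : ℕ)) *
            (∏ l ∈ Finset.univ.filter
              (fun l : Fin (L + 1) => (j : ℕ) ≤ (l : ℕ) ∧ (l : ℕ) < L), b l) /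
            ((∏ k ∈ T.erase m, (x m - x k)) *
             (∏ k ∈ Finset.univ.filter (fun k : Fin (L + 1) => (i : ℕ) < (k : ℕ)),
              (x m - x k))) := by
          show (if j ≤ m then _ else _) = _
          rw [if_pos hjm]
          simp only [hfb]
          rw [hQsplit, Finset.prod_union hdisj]
        rw [hS, hSinv, Finset.prod_inv_distrib]
        have hR : (∏ k ∈ T.erase m, (x m - x k)) ≠ 0 := by
          rw [Finset.prod_ne_zero_iff]
          intro k hk
          exact hxne m k (Finset.ne_of_mem_erase hk)
        have hP := hPne m i hmiN
        exact frac_aux _ _ _ _ _ _ hP (hBne i) hR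
      rw [hsum, Finset.sum_congr rfl hterm, ← Finset.mul_sum]
      by_cases hij : i = j
      · rw [if_pos hij]
        have hTi : T = {i} := by
          ext k
          simp only [hT, mem_filter, mem_univ, true_and, Fin.le_def, mem_singleton,
            Fin.ext_iff, ← hij]
          omega
        rw [hTi, Finset.sum_singleton, Finset.erase_singleton, Finset.prod_empty,
          mul_one, ← hij]
        rw [div_eq_one_iff_eq (hBne i)]
        rw [← mul_pow]
        field_simp
        rw [one_pow, one_mul]
      · rw [if_neg hij]
        have hcard : 2 ≤ T.card := by
          have hsub : ({j, i} : Finset (Fin (L + 1))) ⊆ T := by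
            intro k hk
            simp only [mem_insert, mem_singleton] at hk
            simp only [hT, mem_filter, mem_univ, true_and]
            rcases hk with h | h <;> subst h
            · exact ⟨le_refl _, hji⟩
            · exact ⟨hji, le_refl _⟩
          have := Finset.card_le_card hsub
          rwa [Finset.card_pair (fun h => hij h.symm)] at this
        have hinj : Set.InjOn x T := by
          intro a ha c hc h
          by_contra hac
          exact hxne a c (Ne.symm hac) (by rw [h, sub_self])
        rw [lagrange_sum_inv T x hinj hcard, mul_zero]
    · rw [if_neg (fun h => hji (le_of_eq h.symm))]
      refine Finset.sum_eq_zero fun m _ => ?_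
      by_cases hmi : m ≤ i
      · have h2 : ¬ j ≤ m := fun h => hji (h.trans hmi)
        have : Sinv m j = 0 := if_neg h2
        rw [this, mul_zero]
      · have : S i m = 0 := if_neg hmi
        rw [this, zero_mul]
  refine ⟨hSSinv, mul_eq_one_comm.mp hSSinv, ?_⟩
  have hMS : M * S = S * D := by
    ext i j
    rw [Matrix.mul_apply, Matrix.mul_apply]
    have hrhs : ∑ m, S i m * D m j = S i j * (f j - b j * μ) := by
      have : ∀ m, S i m * D m j = if m = j then S i m * (f m - b m * μ) else 0 := by
        intro m
        show S i m * (if m = j then _ else _) = _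
        by_cases h : m = j
        · rw [if_pos h, if_pos h]
        · rw [if_neg h, if_neg h, mul_zero]
      rw [Finset.sum_congr rfl fun m _ => this m, Finset.sum_ite_eq' Finset.univ j,
        if_pos (Finset.mem_univ j)]
    rw [hrhs]
    by_cases hi0 : (i : ℕ) = 0
    · have hlhs : ∀ m, M i m * S m j = if m = i then (f i - b i * μ) * S m j else 0 := by
        intro m
        show (if i = m then _ else _) * S m j = _
        by_cases h : i = m
        · rw [if_pos h, if_pos h.symm, h]
        · rw [if_neg h, if_neg (by omega : ¬ (m : ℕ) + 1 = (i : ℕ)),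
            if_neg (fun hh => h hh.symm), zero_mul]
      rw [Finset.sum_congr rfl fun m _ => hlhs m, Finset.sum_ite_eq' Finset.univ i,
        if_pos (Finset.mem_univ i)]
      by_cases hji : j ≤ i
      · have : j = i := by
          have : (j : ℕ) ≤ (i : ℕ) := hji
          exact Fin.ext (by omega)
        rw [this]; ring
      · have : S i j = 0 := if_neg hji
        rw [this, mul_zero, zero_mul]
    · obtain ⟨c, hc⟩ : ∃ c, (i : ℕ) = c + 1 := ⟨(i : ℕ) - 1, by omega⟩
      have hcL : c + 1 ≤ L := by have := i.isLt; omega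
      set i' : Fin (L + 1) := ⟨c, by omega⟩ with hi'
      have hii' : i ≠ i' := by
        intro h
        rw [Fin.ext_iff] at h
        simp only [hi'] at h
        omega
      have hlhs : ∀ m, M i m * S m j =
          (if m = i then (f i - b i * μ) * S m j else 0) +
          (if m = i' then (μ / ζ) * b m * S m j else 0) := by
        intro m
        show (if i = m then _ else _) * S m j = _
        by_cases h1 : i = m
        · rw [if_pos h1, if_pos h1.symm, if_neg (fun h : m = i' => hii' (h1.trans h)),
            add_zero, h1]
        · rw [if_neg h1]
          by_cases h2 : m = i'
          · have hv : (m : ℕ) + 1 = (i : ℕ) := by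
              rw [h2]; simp only [hi']; omega
            rw [if_pos hv, if_neg (fun hh => h1 hh.symm), if_pos h2, zero_add]
          · have hv : ¬ (m : ℕ) + 1 = (i : ℕ) := by
              intro hh
              apply h2
              apply Fin.ext
              simp only [hi']
              omega
            rw [if_neg hv, if_neg (fun hh => h1 hh.symm), if_neg h2, zero_mul, add_zero]
      rw [Finset.sum_congr rfl fun m _ => hlhs m, Finset.sum_add_distrib,
        Finset.sum_ite_eq' Finset.univ i, Finset.sum_ite_eq' Finset.univ i',
        if_pos (Finset.mem_univ i), if_pos (Finset.mem_univ i')]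
      by_cases hji : j ≤ i
      · by_cases hjieq : j = i
        · have hji' : ¬ j ≤ i' := by
            intro h
            have : (j : ℕ) ≤ (i' : ℕ) := h
            simp only [hi'] at this
            rw [hjieq] at this
            omega
          have : S i' j = 0 := if_neg hji'
          rw [this, mul_zero, add_zero, hjieq]
          ring
        · have hjc : (j : ℕ) ≤ c := by
            have h1 : (j : ℕ) ≤ (i : ℕ) := hji
            have h2 : (j : ℕ) ≠ (i : ℕ) := fun h => hjieq (Fin.ext h)
            omega
          have hji'2 : j ≤ i' := by
            show (j : ℕ) ≤ (i' : ℕ)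
            simp only [hi']
            omega
          have hSij : S i j = (ζ / μ) ^ (L - (c + 1)) *
              (∏ k ∈ Finset.univ.filter (fun k : Fin (L + 1) => c + 1 < (k : ℕ)),
                (x j - x k)) /
              (∏ l ∈ Finset.univ.filter
                (fun l : Fin (L + 1) => c + 1 ≤ (l : ℕ) ∧ (l : ℕ) < L), b l) := by
            show (if j ≤ i then _ else _) = _
            rw [if_pos hji]
            simp only [hfb, hc]
          have hPc : (∏ k ∈ Finset.univ.filter
                (fun k : Fin (L + 1) => (i' : ℕ) < (k : ℕ)), (x j - x k))
              = (x j - x i) *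
                ∏ k ∈ Finset.univ.filter (fun k : Fin (L + 1) => c + 1 < (k : ℕ)),
                  (x j - x k) := by
            have hset : Finset.univ.filter (fun k : Fin (L + 1) => (i' : ℕ) < (k : ℕ))
                = insert i (Finset.univ.filter
                    (fun k : Fin (L + 1) => c + 1 < (k : ℕ))) := by
              ext k
              simp only [mem_filter, mem_insert, mem_univ, true_and, Fin.ext_iff, hi', hc]
              omega
            rw [hset, Finset.prod_insert (by simp [mem_filter, hc])]
          have hBc : (∏ l ∈ Finset.univ.filter
                (fun l : Fin (L + 1) => (i' : ℕ) ≤ (l : ℕ) ∧ (l : ℕ) < L), b l)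
              = b i' * ∏ l ∈ Finset.univ.filter
                  (fun l : Fin (L + 1) => c + 1 ≤ (l : ℕ) ∧ (l : ℕ) < L), b l := by
            have hset : Finset.univ.filter
                  (fun l : Fin (L + 1) => (i' : ℕ) ≤ (l : ℕ) ∧ (l : ℕ) < L)
                = insert i' (Finset.univ.filter
                    (fun l : Fin (L + 1) => c + 1 ≤ (l : ℕ) ∧ (l : ℕ) < L)) := by
              ext l
              simp only [mem_filter, mem_insert, mem_univ, true_and, Fin.ext_iff, hi']
              omega
            rw [hset, Finset.prod_insert (by simp [mem_filter, hi'])]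
          have hSi'j : S i' j = (ζ / μ) ^ (L - c) *
              ((x j - x i) *
                ∏ k ∈ Finset.univ.filter (fun k : Fin (L + 1) => c + 1 < (k : ℕ)),
                  (x j - x k)) /
              (b i' * ∏ l ∈ Finset.univ.filter
                  (fun l : Fin (L + 1) => c + 1 ≤ (l : ℕ) ∧ (l : ℕ) < L), b l) := by
            show (if j ≤ i' then _ else _) = _
            rw [if_pos hji'2]
            simp only [hfb]
            rw [hPc, hBc]
          rw [hSij, hSi'j]
          have hbi' : b i' ≠ 0 := ne_of_gt (hbpos i' (by simp only [hi']; omega))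
          have hBne2 : (∏ l ∈ Finset.univ.filter
              (fun l : Fin (L + 1) => c + 1 ≤ (l : ℕ) ∧ (l : ℕ) < L), b l) ≠ 0 := by
            rw [Finset.prod_ne_zero_iff]
            intro l hl
            simp only [mem_filter] at hl
            exact ne_of_gt (hbpos l (by omega))
          have hpow : (ζ / μ) ^ (L - c) = (ζ / μ) ^ (L - (c + 1)) * (ζ / μ) := by
            rw [← pow_succ]
            congr 1
            omega
          rw [hpow]
          have hdi : f i - b i * μ = x i := by simp only [hxdef]; ring
          have hdj : f j - b j * μ = x j := by simp only [hxdef]; ring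
          rw [hdi, hdj]
          field_simp
          ring
      · have h1 : S i j = 0 := if_neg hji
        have h2 : S i' j = 0 := by
          refine if_neg fun h => hji ?_
          show (j : ℕ) ≤ (i : ℕ)
          have : (j : ℕ) ≤ (i' : ℕ) := h
          simp only [hi'] at this
          omega
        rw [h1, h2, mul_zero, mul_zero, add_zero, zero_mul]
  have : M = M * (S * Sinv) := by rw [hSSinv, Matrix.mul_one]
  rw [this, ← Matrix.mul_assoc, hMS, Matrix.mul_assoc, ← Matrix.mul_assoc]
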